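/- In a finite MDP with n states, if d0 is not sure strongly synchronizing in T, then for every strategy σ there exist infinitely many positions i_0 < i_1 < i_2 < ... with i_0 ≤ n and i_{j+1} − i_j ≤ n for all j, such that M^σ_{i_j}(T) < 1 for each j. -/

import Mathlib

open scoped BigOperators
open Classical Filter

/-- A finite Markov decision process with real transition probabilities. -/
structure MDP (Q A : Type) [Fintype Q] [Fintype A] where
  δ : Q → A → Q → ℝ
  δ_nonneg : ∀ q a q', 0 ≤ δ q a q'
  δ_sum : ∀ q a, ∑ q', δ q a q' = 1

namespace MDP

variable {Q A : Type} [Fintype Q] [Fintype A]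

/-- `d` is a probability distribution. -/
def IsDist (d : Q → ℝ) : Prop := (∀ q, 0 ≤ d q) ∧ ∑ q, d q = 1

/-- A (randomized, history-dependent) strategy maps a history (list of past
state-action pairs) and the current state to a distribution over actions. -/
def IsStrategy (σ : List (Q × A) → Q → A → ℝ) : Prop :=
  (∀ h q a, 0 ≤ σ h q a) ∧ ∀ h q, ∑ a, σ h q a = 1

/-- The probability of the finite path `qs` (with actions `as`) of length `i`,
under strategy `σ` from initial distribution `d0`. -/
noncomputable def pathProb (M : MDP Q A) (σ : List (Q × A) → Q → A → ℝ)
    (d0 : Q → ℝ) (i : ℕ) (qs : Fin (i + 1) → Q) (as : Fin i → A) : ℝ :=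
  d0 (qs 0) * ∏ j : Fin i,
    (σ (List.ofFn (fun k : Fin j.val =>
          (qs ⟨k.val, by have := k.isLt; have := j.isLt; omega⟩,
           as ⟨k.val, by have := k.isLt; have := j.isLt; omega⟩)))
        (qs j.castSucc) (as j))
      * M.δ (qs j.castSucc) (as j) (qs j.succ)

/-- The distribution over states after `i` steps (`M^σ_i`). -/
noncomputable def stepDist (M : MDP Q A) (σ : List (Q × A) → Q → A → ℝ)
    (d0 : Q → ℝ) (i : ℕ) (q : Q) : ℝ :=
  ∑ qs : Fin (i + 1) → Q, ∑ as : Fin i → A,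
    if qs (Fin.last i) = q then M.pathProb σ d0 i qs as else 0

/-- The probability mass that a (sub)distribution assigns to a set `T`. -/
noncomputable def mass (d : Q → ℝ) (T : Set Q) : ℝ := ∑ q, T.indicator d q

/-- The support of a (sub)distribution. -/
def supp {α : Type} (d : α → ℝ) : Set α := {q | 0 < d q}

/-- One-step sure predecessors of `Y`. -/
def Pre (M : MDP Q A) (Y : Set Q) : Set Q :=
  {q | ∃ a, ∀ q', 0 < M.δ q a q' → q' ∈ Y}

/-- Probability of reaching `T` within `i` steps. -/
noncomputable def reachProb (M : MDP Q A) (σ : List (Q × A) → Q → A → ℝ)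
    (d0 : Q → ℝ) (T : Set Q) (i : ℕ) : ℝ :=
  ∑ qs : Fin (i + 1) → Q, ∑ as : Fin i → A,
    if ∃ j, qs j ∈ T then M.pathProb σ d0 i qs as else 0

/-- `d0` is almost-sure winning for the reachability objective `◇T`:
some strategy reaches `T` with probability one. -/
def ASReach (M : MDP Q A) (d0 : Q → ℝ) (T : Set Q) : Prop :=
  ∃ σ, IsStrategy σ ∧ (⨆ i : ℕ, M.reachProb σ d0 T i) = 1

/-- `d0` is limit-sure eventually synchronizing in `T`. -/
def LimitSureEventually (M : MDP Q A) (d0 : Q → ℝ) (T : Set Q) : Prop :=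
  ∀ ε > (0 : ℝ), ∃ σ, IsStrategy σ ∧ ∃ i, 1 - ε ≤ mass (M.stepDist σ d0 i) T

/-- `d0` is almost-sure weakly synchronizing in `T`. -/
def ASWeakly (M : MDP Q A) (d0 : Q → ℝ) (T : Set Q) : Prop :=
  ∃ σ, IsStrategy σ ∧ ∀ ε > (0 : ℝ), {i : ℕ | 1 - ε ≤ mass (M.stepDist σ d0 i) T}.Infinite

/-- `d0` is almost-sure strongly synchronizing in `T`. -/
def ASStrongly (M : MDP Q A) (d0 : Q → ℝ) (T : Set Q) : Prop :=
  ∃ σ, IsStrategy σ ∧ ∀ ε > (0 : ℝ), ∃ N, ∀ i ≥ N, 1 - ε ≤ mass (M.stepDist σ d0 i) T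

/-- The uniform distribution on a set `S`. -/
noncomputable def uniformOn (S : Set Q) : Q → ℝ :=
  fun q => if q ∈ S then 1 / (S.ncard : ℝ) else 0

/-- The uniform strategy, playing all actions uniformly at random. -/
noncomputable def uniformStrategy (Q A : Type) [Fintype A] :
    List (Q × A) → Q → A → ℝ :=
  fun _ _ _ => 1 / (Fintype.card A : ℝ)

/-- Action `a` is allowed in `q` w.r.t. `S` if all its successors stay in `S`. -/
def Allowed (M : MDP Q A) (S : Set Q) (q : Q) (a : A) : Prop :=
  ∀ q', 0 < M.δ q a q' → q' ∈ S

/-- Edge relation within `S` given the allowed actions. -/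
def ECEdge (M : MDP Q A) (S : Set Q) (q q' : Q) : Prop :=
  q ∈ S ∧ q' ∈ S ∧ ∃ a, M.Allowed S q a ∧ 0 < M.δ q a q'

/-- `S` is an end-component: closed and strongly connected via allowed actions. -/
def IsEC (M : MDP Q A) (S : Set Q) : Prop :=
  (∀ q ∈ S, ∃ a, M.Allowed S q a) ∧
  ∀ q ∈ S, ∀ q' ∈ S, Relation.ReflTransGen (M.ECEdge S) q q'

/-- The union of all end-components. -/
def ECUnion (M : MDP Q A) : Set Q := ⋃₀ {S | M.IsEC S}

/-- Positive always synchronizing in `T`. -/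
def PosAlways (M : MDP Q A) (d0 : Q → ℝ) (T : Set Q) : Prop :=
  ∃ σ, IsStrategy σ ∧ ∀ i, 0 < mass (M.stepDist σ d0 i) T

/-- Positive eventually synchronizing in `T`. -/
def PosEvent (M : MDP Q A) (d0 : Q → ℝ) (T : Set Q) : Prop :=
  ∃ σ, IsStrategy σ ∧ ∃ i, 0 < mass (M.stepDist σ d0 i) T

/-- Positive weakly synchronizing in `T`. -/
def PosWeakly (M : MDP Q A) (d0 : Q → ℝ) (T : Set Q) : Prop :=
  ∃ σ, IsStrategy σ ∧ ∀ N, ∃ i ≥ N, 0 < mass (M.stepDist σ d0 i) T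

/-- Positive strongly synchronizing in `T`. -/
def PosStrongly (M : MDP Q A) (d0 : Q → ℝ) (T : Set Q) : Prop :=
  ∃ σ, IsStrategy σ ∧ ∃ N, ∀ i ≥ N, 0 < mass (M.stepDist σ d0 i) T

/-- Bounded always synchronizing in `T`. -/
def BndAlways (M : MDP Q A) (d0 : Q → ℝ) (T : Set Q) : Prop :=
  ∃ σ, IsStrategy σ ∧ ∃ ε > (0 : ℝ), ∀ i, ε < mass (M.stepDist σ d0 i) T

/-- Bounded eventually synchronizing in `T`. -/
def BndEvent (M : MDP Q A) (d0 : Q → ℝ) (T : Set Q) : Prop :=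
  ∃ σ, IsStrategy σ ∧ ∃ ε > (0 : ℝ), ∃ i, ε < mass (M.stepDist σ d0 i) T

/-- Bounded weakly synchronizing in `T`. -/
def BndWeakly (M : MDP Q A) (d0 : Q → ℝ) (T : Set Q) : Prop :=
  ∃ σ, IsStrategy σ ∧ ∃ ε > (0 : ℝ), ∀ N, ∃ i ≥ N, ε < mass (M.stepDist σ d0 i) T

/-- Bounded strongly synchronizing in `T`. -/
def BndStrongly (M : MDP Q A) (d0 : Q → ℝ) (T : Set Q) : Prop :=
  ∃ σ, IsStrategy σ ∧ ∃ ε > (0 : ℝ), ∃ N, ∀ i ≥ N, ε < mass (M.stepDist σ d0 i) T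


end MDP

/-!
Suppose some strategy `σ` put all its mass in `T` at `n = |Q|` consecutive steps
`p, …, p + n - 1`. Every state in the support at step `i` has an action leading only into
the support at step `i + 1`, so the support at step `p` lies in the `n`-th iterate `W` of
`X ↦ T ∩ Pre X` started from `Q`. This decreasing iteration stabilises within `n` steps, so
`W = T ∩ Pre W` (it is the sure winning region of `□T`). Following `σ` up to step `p` and
then always choosing a `W`-preserving action keeps the whole mass inside `W ⊆ T` from step
`p` on, so `d0` would be sure strongly synchronizing. Hence every window of `n` consecutive
steps contains a step with mass `< 1` in `T`, which yields the sequence `i_0 < i_1 < ⋯`.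
-/

theorem Nat.exists_strictMono_of_forall_exists_window {P : ℕ → Prop} {n : ℕ}
    (h : ∀ p, ∃ i, p ≤ i ∧ i < p + n ∧ P i) :
    ∃ f : ℕ → ℕ, StrictMono f ∧ f 0 < n ∧ (∀ j, f (j + 1) - f j ≤ n) ∧ ∀ j, P (f j) := by
  choose g hge hlt hP using h
  let f : ℕ → ℕ := fun j => (fun x => g (x + 1))^[j] (g 0)
  have hf : ∀ j, f (j + 1) = g (f j + 1) := fun j => Function.iterate_succ_apply' _ j _
  refine ⟨f, strictMono_nat_of_lt_succ fun j => ?_, by simpa [f] using hlt 0, fun j => ?_,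
    fun j => ?_⟩
  · rw [hf]; exact hge _
  · rw [hf]; have hnext := hlt (f j + 1); omega
  · cases j with
    | zero => exact hP 0
    | succ j => rw [hf]; exact hP _

theorem Set.exists_succ_eq_of_antitone {α : Type*} [Fintype α] {s : ℕ → Set α}
    (hs : Antitone s) : ∃ k ≤ Fintype.card α, s (k + 1) = s k := by
  by_contra! hne
  have hcard : ∀ k ≤ Fintype.card α + 1, (s k).ncard + k ≤ Fintype.card α := by
    intro k hk
    induction k with
    | zero => simpa [Nat.card_eq_fintype_card] using Set.ncard_le_card (s 0)
    | succ k ih =>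
      have hshrink :=
        Set.ncard_lt_ncard ((hs (Nat.le_add_right k 1)).ssubset_of_ne (hne k (by omega)))
      have hprev := ih (by omega)
      omega
  have hlast := hcard _ le_rfl
  omega

theorem Fin.snoc_mk_of_lt {α : Type*} {n k : ℕ} (f : Fin n → α) (x : α) (hk : k < n + 1)
    (h : k < n) : (Fin.snoc f x : Fin (n + 1) → α) ⟨k, hk⟩ = f ⟨k, h⟩ :=
  Fin.snoc_castSucc (α := fun _ => α) (i := ⟨k, h⟩) x f

namespace MDP

variable {Q A : Type}

def history {i : ℕ} (qs : Fin (i + 1) → Q) (as : Fin i → A) : List (Q × A) :=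
  List.ofFn fun k : Fin i => (qs k.castSucc, as k)

@[simp]
lemma length_history {i : ℕ} (qs : Fin (i + 1) → Q) (as : Fin i → A) :
    (history qs as).length = i :=
  List.length_ofFn

lemma IsStrategy.exists_pos [Fintype A] {σ : List (Q × A) → Q → A → ℝ} (hσ : IsStrategy σ)
    (h : List (Q × A)) (q : Q) : ∃ a, 0 < σ h q a := by
  obtain ⟨a, -, ha⟩ := (Finset.sum_pos_iff_of_nonneg fun a _ => hσ.1 h q a).1
    (hσ.2 h q ▸ one_pos)
  exact ⟨a, ha⟩

variable [Fintype Q] [Fintype A]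

lemma mass_le_one {d : Q → ℝ} (hd : IsDist d) (T : Set Q) : mass d T ≤ 1 :=
  hd.2 ▸ Finset.sum_le_sum fun q _ => Set.indicator_le_self' (fun q _ => hd.1 q) q

lemma mass_eq_one_iff_supp_subset {d : Q → ℝ} (hd : IsDist d) (T : Set Q) :
    mass d T = 1 ↔ supp d ⊆ T := by
  have hsplit : mass d T + mass d Tᶜ = 1 := by
    rw [mass, mass, ← Finset.sum_add_distrib, ← hd.2]
    exact Finset.sum_congr rfl fun q _ => congrFun (T.indicator_self_add_compl d) q
  have hcompl : mass d T = 1 ↔ mass d Tᶜ = 0 := by constructor <;> intro h <;> linarith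
  rw [hcompl, mass, Finset.sum_eq_zero_iff_of_nonneg fun q _ =>
    Set.indicator_nonneg (fun q _ => hd.1 q) q]
  refine forall_congr' fun q => ?_
  rw [Set.indicator_apply_eq_zero, Set.mem_compl_iff, not_imp_comm]
  simp [supp, (hd.1 q).lt_iff_ne']

lemma Pre_mono (M : MDP Q A) : Monotone M.Pre :=
  fun _ _ hXY _ ⟨a, ha⟩ => ⟨a, fun q' hq' => hXY (ha q' hq')⟩

section Paths

variable (M : MDP Q A) {σ : List (Q × A) → Q → A → ℝ} {d0 : Q → ℝ}

lemma pathProb_snoc (i : ℕ) (qs : Fin (i + 1) → Q) (as : Fin i → A) (q : Q) (a : A) :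
    M.pathProb σ d0 (i + 1) (Fin.snoc qs q) (Fin.snoc as a) =
      M.pathProb σ d0 i qs as *
        (σ (history qs as) (qs (Fin.last i)) a * M.δ (qs (Fin.last i)) a q) := by
  simp (disch := omega) only [pathProb, Fin.prod_univ_castSucc, history, mul_assoc,
    Fin.snoc_mk_of_lt, Fin.snoc_castSucc, Fin.snoc_last, Fin.succ_last, Fin.succ_castSucc]
  rfl

lemma stepDist_congr {σ' : List (Q × A) → Q → A → ℝ} {i : ℕ}
    (h : ∀ hist q a, hist.length < i → σ hist q a = σ' hist q a) :
    M.stepDist σ d0 i = M.stepDist σ' d0 i := by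
  have hpath : M.pathProb σ d0 i = M.pathProb σ' d0 i := by
    funext qs as
    refine congrArg _ (Finset.prod_congr rfl fun j _ => ?_)
    rw [h _ _ _ (by simp)]
  unfold stepDist
  rw [hpath]

lemma pathProb_nonneg (hσ : IsStrategy σ) (hd0 : IsDist d0) {i : ℕ} (qs : Fin (i + 1) → Q)
    (as : Fin i → A) : 0 ≤ M.pathProb σ d0 i qs as :=
  mul_nonneg (hd0.1 _) <|
    Finset.prod_nonneg fun _ _ => mul_nonneg (hσ.1 _ _ _) (M.δ_nonneg _ _ _)

lemma sum_pathProb (hσ : IsStrategy σ) (hd0 : IsDist d0) (i : ℕ) :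
    ∑ qs, ∑ as, M.pathProb σ d0 i qs as = 1 := by
  induction i with
  | zero =>
    rw [← hd0.2, ← (Equiv.funUnique (Fin 1) Q).sum_comp]
    simp [pathProb]
  | succ i ih =>
    have hstep : ∀ h q, ∑ a, ∑ q', σ h q a * M.δ q a q' = 1 := fun h q => by
      simp only [← Finset.mul_sum, M.δ_sum, mul_one, hσ.2]
    calc ∑ qs, ∑ as, M.pathProb σ d0 (i + 1) qs as
        = ∑ q, ∑ qs, ∑ a, ∑ as, M.pathProb σ d0 (i + 1) (Fin.snoc qs q) (Fin.snoc as a) := by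
          simp only [← (Fin.snocEquiv fun _ => Q).sum_comp,
            ← (Fin.snocEquiv fun _ => A).sum_comp, Fintype.sum_prod_type]
          rfl
      _ = ∑ qs, ∑ as, M.pathProb σ d0 i qs as *
            ∑ a, ∑ q, σ (history qs as) (qs (Fin.last i)) a * M.δ (qs (Fin.last i)) a q := by
          simp only [pathProb_snoc, Finset.mul_sum]
          rw [Finset.sum_comm]
          refine Finset.sum_congr rfl fun qs _ => ?_
          rw [Finset.sum_comm]
          simp only [Finset.sum_comm (s := (Finset.univ : Finset Q))
            (t := (Finset.univ : Finset (Fin i → A)))]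
          rw [Finset.sum_comm]
      _ = 1 := by simp only [hstep, mul_one, ih]

lemma stepDist_nonneg (hσ : IsStrategy σ) (hd0 : IsDist d0) (i : ℕ) (q : Q) :
    0 ≤ M.stepDist σ d0 i q :=
  Finset.sum_nonneg fun qs _ => Finset.sum_nonneg fun as _ => by
    split_ifs
    exacts [M.pathProb_nonneg hσ hd0 qs as, le_rfl]

lemma isDist_stepDist (hσ : IsStrategy σ) (hd0 : IsDist d0) (i : ℕ) :
    IsDist (M.stepDist σ d0 i) := by
  refine ⟨M.stepDist_nonneg hσ hd0 i, ?_⟩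
  rw [← M.sum_pathProb hσ hd0 i]
  unfold stepDist
  rw [Finset.sum_comm]
  refine Finset.sum_congr rfl fun qs _ => ?_
  rw [Finset.sum_comm]
  simp

lemma stepDist_pos_iff (hσ : IsStrategy σ) (hd0 : IsDist d0) (i : ℕ) (q : Q) :
    0 < M.stepDist σ d0 i q ↔ ∃ qs as, qs (Fin.last i) = q ∧ 0 < M.pathProb σ d0 i qs as := by
  have hterm : ∀ qs as,
      0 ≤ if qs (Fin.last i) = q then M.pathProb σ d0 i qs as else 0 := fun qs as => by
    split_ifs
    exacts [M.pathProb_nonneg hσ hd0 qs as, le_rfl]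
  simp only [stepDist, Finset.sum_pos_iff_of_nonneg fun qs _ => Finset.sum_nonneg fun as _ =>
    hterm qs as, Finset.sum_pos_iff_of_nonneg fun as _ => hterm _ as, Finset.mem_univ,
    true_and]
  refine exists_congr fun qs => ?_
  split_ifs with hq <;> simp [hq]

lemma stepDist_succ_pos_iff (hσ : IsStrategy σ) (hd0 : IsDist d0) (i : ℕ) (q : Q) :
    0 < M.stepDist σ d0 (i + 1) q ↔ ∃ qs as a, 0 < M.pathProb σ d0 i qs as ∧
      0 < σ (history qs as) (qs (Fin.last i)) a ∧ 0 < M.δ (qs (Fin.last i)) a q := by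
  rw [stepDist_pos_iff M hσ hd0]
  constructor
  · rintro ⟨qs, as, rfl, hpath⟩
    rw [← Fin.snoc_init_self qs, ← Fin.snoc_init_self as, pathProb_snoc] at hpath
    have hne := hpath.ne'
    simp only [mul_ne_zero_iff] at hne
    refine ⟨Fin.init qs, Fin.init as, as (Fin.last i),
      (M.pathProb_nonneg hσ hd0 _ _).lt_of_ne' hne.1, (hσ.1 _ _ _).lt_of_ne' hne.2.1, ?_⟩
    simpa using (M.δ_nonneg _ _ _).lt_of_ne' hne.2.2
  · rintro ⟨qs, as, a, hpath, ha, hδ⟩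
    refine ⟨Fin.snoc qs q, Fin.snoc as a, Fin.snoc_last .., ?_⟩
    rw [pathProb_snoc]
    exact mul_pos hpath (mul_pos ha hδ)

lemma supp_stepDist_subset_Pre (hσ : IsStrategy σ) (hd0 : IsDist d0) (i : ℕ) :
    supp (M.stepDist σ d0 i) ⊆ M.Pre (supp (M.stepDist σ d0 (i + 1))) := by
  intro q hq
  obtain ⟨qs, as, rfl, hpath⟩ := (M.stepDist_pos_iff hσ hd0 i q).1 hq
  obtain ⟨a, ha⟩ := hσ.exists_pos (history qs as) (qs (Fin.last i))
  exact ⟨a, fun q' hq' => (M.stepDist_succ_pos_iff hσ hd0 i q').2 ⟨qs, as, a, hpath, ha, hq'⟩⟩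

end Paths

/-- The states from which `T` can surely be kept for `k` steps; these sets decrease to the
sure winning region of `□T`. -/
def safeIter (M : MDP Q A) (T : Set Q) : ℕ → Set Q
  | 0 => Set.univ
  | k + 1 => T ∩ M.Pre (safeIter M T k)

section Safety

variable (M : MDP Q A) (T : Set Q)

lemma safeIter_antitone : Antitone (M.safeIter T) := by
  refine antitone_nat_of_succ_le fun k => ?_
  induction k with
  | zero => exact Set.subset_univ _
  | succ k ih => exact Set.inter_subset_inter_right T (M.Pre_mono ih)

lemma safeIter_eq_of_succ_eq {k : ℕ} (hk : M.safeIter T (k + 1) = M.safeIter T k) {m : ℕ}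
    (hm : k ≤ m) : M.safeIter T m = M.safeIter T k := by
  induction m, hm using Nat.le_induction with
  | base => rfl
  | succ m _ ih => rw [safeIter, ih]; exact hk

lemma safeIter_card_eq :
    M.safeIter T (Fintype.card Q) = T ∩ M.Pre (M.safeIter T (Fintype.card Q)) := by
  obtain ⟨k, hk, hstab⟩ := Set.exists_succ_eq_of_antitone (M.safeIter_antitone T)
  have hsucc := M.safeIter_eq_of_succ_eq T hstab (m := Fintype.card Q + 1) (by omega)
  rw [safeIter] at hsucc
  rw [hsucc, M.safeIter_eq_of_succ_eq T hstab hk]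

lemma supp_stepDist_subset_safeIter {σ : List (Q × A) → Q → A → ℝ} {d0 : Q → ℝ}
    (hσ : IsStrategy σ) (hd0 : IsDist d0) {m p : ℕ}
    (hT : ∀ i, p ≤ i → i < p + m → supp (M.stepDist σ d0 i) ⊆ T) :
    supp (M.stepDist σ d0 p) ⊆ M.safeIter T m := by
  induction m generalizing p with
  | zero => exact Set.subset_univ _
  | succ m ih =>
    have hnext := ih (p := p + 1) fun i hi hi' => hT i (by omega) (by omega)
    exact Set.subset_inter (hT p le_rfl (by omega))
      ((M.supp_stepDist_subset_Pre hσ hd0 p).trans (M.Pre_mono hnext))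

end Safety

section Switch

noncomputable def switchToSafe (M : MDP Q A) (σ : List (Q × A) → Q → A → ℝ) (p : ℕ)
    (W : Set Q) : List (Q × A) → Q → A → ℝ :=
  fun h q a => if hq : p ≤ h.length ∧ q ∈ M.Pre W then
    (if a = Classical.choose hq.2 then 1 else 0) else σ h q a

variable (M : MDP Q A) {σ : List (Q × A) → Q → A → ℝ} {p : ℕ} {W : Set Q}

lemma isStrategy_switchToSafe (hσ : IsStrategy σ) : IsStrategy (M.switchToSafe σ p W) := by
  refine ⟨fun h q a => ?_, fun h q => ?_⟩ <;> unfold switchToSafe <;> split_ifs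
  · exact zero_le_one
  · exact le_rfl
  · exact hσ.1 h q a
  · simp
  · exact hσ.2 h q

lemma switchToSafe_of_length_lt {h : List (Q × A)} (hh : h.length < p) (q : Q) (a : A) :
    M.switchToSafe σ p W h q a = σ h q a :=
  dif_neg fun hq => hq.1.not_gt hh

lemma mem_of_switchToSafe_pos {h : List (Q × A)} (hh : p ≤ h.length) {q : Q} (hq : q ∈ M.Pre W)
    {a : A} (ha : 0 < M.switchToSafe σ p W h q a) {q' : Q} (hδ : 0 < M.δ q a q') : q' ∈ W := by
  rw [switchToSafe, dif_pos ⟨hh, hq⟩] at ha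
  split_ifs at ha with hchoice
  · exact Classical.choose_spec hq q' (hchoice ▸ hδ)
  · exact absurd ha (lt_irrefl 0)

lemma supp_stepDist_switchToSafe_subset {d0 : Q → ℝ} (hσ : IsStrategy σ) (hd0 : IsDist d0)
    (hW : W ⊆ M.Pre W) (hp : supp (M.stepDist σ d0 p) ⊆ W) {i : ℕ} (hi : p ≤ i) :
    supp (M.stepDist (M.switchToSafe σ p W) d0 i) ⊆ W := by
  induction i, hi using Nat.le_induction with
  | base =>
    rwa [M.stepDist_congr fun h q a hh => M.switchToSafe_of_length_lt hh q a]
  | succ i hi ih =>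
    intro q' hq'
    obtain ⟨qs, as, a, hpath, ha, hδ⟩ :=
      (M.stepDist_succ_pos_iff (M.isStrategy_switchToSafe hσ) hd0 i q').1 hq'
    have hlast : qs (Fin.last i) ∈ W :=
      ih ((M.stepDist_pos_iff (M.isStrategy_switchToSafe hσ) hd0 i _).2 ⟨qs, as, rfl, hpath⟩)
    exact M.mem_of_switchToSafe_pos (by simpa using hi) (hW hlast) ha hδ

end Switch

theorem exists_mass_lt_one_of_not_sureStrongly (M : MDP Q A) {d0 : Q → ℝ} (hd0 : IsDist d0)
    {T : Set Q} (h : ¬ ∃ σ, IsStrategy σ ∧ ∃ N : ℕ, ∀ i ≥ N, mass (M.stepDist σ d0 i) T = 1)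
    {σ : List (Q × A) → Q → A → ℝ} (hσ : IsStrategy σ) (p : ℕ) :
    ∃ i, p ≤ i ∧ i < p + Fintype.card Q ∧ mass (M.stepDist σ d0 i) T < 1 := by
  by_contra! hwindow
  set W := M.safeIter T (Fintype.card Q)
  have hW : W = T ∩ M.Pre W := M.safeIter_card_eq T
  have hpW : supp (M.stepDist σ d0 p) ⊆ W :=
    M.supp_stepDist_subset_safeIter T hσ hd0 fun i hi hi' =>
      (mass_eq_one_iff_supp_subset (M.isDist_stepDist hσ hd0 i) T).1
        ((mass_le_one (M.isDist_stepDist hσ hd0 i) T).antisymm (hwindow i hi hi'))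
  refine h ⟨M.switchToSafe σ p W, M.isStrategy_switchToSafe hσ, p, fun i hi => ?_⟩
  rw [mass_eq_one_iff_supp_subset (M.isDist_stepDist (M.isStrategy_switchToSafe hσ) hd0 i)]
  refine (M.supp_stepDist_switchToSafe_subset hσ hd0 ?_ hpW hi).trans ?_
  · exact hW.trans_subset Set.inter_subset_right
  · exact hW.trans_subset Set.inter_subset_left

end MDP

open MDP in
/-- If `d0` is not sure strongly synchronizing in `T`, then for every strategy
there are infinitely many positions `i_0 < i_1 < ⋯` with `i_0 ≤ n` and
`i_{j+1} - i_j ≤ n`, at which `M^σ_{i_j}(T) < 1`. -/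
theorem stmt8 {Q A : Type} [Fintype Q] [Fintype A] (M : MDP Q A)
    (d0 : Q → ℝ) (hd0 : IsDist d0) (T : Set Q)
    (h : ¬ ∃ σ, IsStrategy σ ∧ ∃ N : ℕ, ∀ i ≥ N, mass (M.stepDist σ d0 i) T = 1) :
    ∀ σ, IsStrategy σ → ∃ f : ℕ → ℕ, StrictMono f ∧ f 0 ≤ Fintype.card Q ∧
      (∀ j, f (j + 1) - f j ≤ Fintype.card Q) ∧
      ∀ j, mass (M.stepDist σ d0 (f j)) T < 1 := by
  intro σ hσ
  obtain ⟨f, hf, hf0, hgap, hlt⟩ := Nat.exists_strictMono_of_forall_exists_window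
    (M.exists_mass_lt_one_of_not_sureStrongly hd0 h hσ)
  exact ⟨f, hf, hf0.le, hgap, hlt⟩
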